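/- arXiv:0807.4316 — 5 statements merged into one kernel-verified Lean document; each statement's English description precedes it below -/
import Mathlib

section
/- Let (Ω, Σ, μ) be a σ-finite measure space and let D : S₀(μ) → S₀(μ) be a ℂ-linear map satisfying D(fg) = D(f)g + fD(g) for all f, g ∈ S₀(μ). Then there exists a measurable set S ∈ Σ with μ(S) < ∞ such that for every f ∈ S₀(μ) the function D(f) vanishes μ-almost everywhere outside S, i.e. χ_S·D(f) = D(f) in S₀(μ) for all f ∈ S₀(μ). -/
/-!
A derivation `D` of `S₀(μ)` kills the indicator `χ_A` of every set `A` of finite measure, because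
`χ_A` is idempotent. Hence `D` is local: on such an `A`, `D f` depends only on the values of `f`
on `A`, up to an additive constant. Given `f j ∈ S₀` and disjoint sets `C j` of finite measure,
subtract from `f j` on `C j` a countably-valued rounding of `f j` with error `< 1/(j+1)`: the
pieces glue to one `F ∈ S₀` with `D F = D (f j)` on every `C j`. For `C j` the disjointed level
sets `{‖D (f j)‖ ≥ 1}`, the fact that `D F ∈ S₀` bounds the measure of their union. So the
supports of countably many `D f` have a union of finite measure, and such a union of maximal
measure contains the support of every `D f` up to a null set.
-/

open MeasureTheory

/-- The algebra `S₀(μ)` of "τ-compact" elements of `L⁰(μ)`: (classes of) measurable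
functions `f` with `μ {|f| ≥ ε} < ∞` for every `ε > 0`. -/
def tauCompactSet {α : Type*} [MeasurableSpace α] (μ : Measure α) :
    Set (α →ₘ[μ] ℂ) :=
  {f | ∀ ε : ℝ, 0 < ε → μ {ω | ε ≤ ‖f ω‖} < ⊤}

open Filter Function Set TopologicalSpace
open scoped ENNReal Topology

theorem IsIdempotentElem.eq_zero_of_eq_mul_add_mul {R : Type*} [CommRing R] {e d : R}
    (he : IsIdempotentElem e) (hd : d = d * e + e * d) : d = 0 := by
  have he' : e * e = e := he
  linear_combination (1 - 2 * e) * hd - 4 * d * he'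

theorem exists_measurable_dist_denseSeq_lt (E : Type*) [PseudoMetricSpace E] [SeparableSpace E]
    [Nonempty E] [MeasurableSpace E] [OpensMeasurableSpace E] {r : ℝ} (hr : 0 < r) :
    ∃ i : E → ℕ, Measurable i ∧ ∀ z, dist z (denseSeq E (i z)) < r := by
  classical
  have hcov : ∀ z, ∃ n, dist z (denseSeq E n) < r :=
    fun z => (denseRange_denseSeq E).exists_dist_lt z hr
  exact ⟨fun z => Nat.find (hcov z), measurable_find hcov fun _ => measurableSet_ball,
    fun z => Nat.find_spec (hcov z)⟩

namespace MeasureTheory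

variable {α : Type*} [MeasurableSpace α] {μ : Measure α}

theorem exists_mem_forall_measure_diff_eq_zero {𝒮 : Set (Set α)} (hne : 𝒮.Nonempty)
    (hmeas : ∀ s ∈ 𝒮, MeasurableSet s) (hfin : ∀ s ∈ 𝒮, μ s < ∞)
    (hunion : ∀ s : ℕ → Set α, (∀ n, s n ∈ 𝒮) → ⋃ n, s n ∈ 𝒮) :
    ∃ S ∈ 𝒮, ∀ T ∈ 𝒮, μ (T \ S) = 0 := by
  obtain ⟨m, -, hm_lim, hm⟩ := exists_seq_tendsto_sSup (hne.image μ) (OrderTop.bddAbove _)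
  choose s hs hsm using hm
  refine ⟨⋃ n, s n, hunion s hs, fun T hT => ?_⟩
  set S := ⋃ n, s n
  have hST : S ∪ T ∈ 𝒮 := by
    have h := hunion (Nat.rec T fun n _ => s n) fun n => n.casesOn hT fun n => hs n
    rwa [← union_iUnion_nat_succ, union_comm] at h
  have hsup_le : sSup (μ '' 𝒮) ≤ μ S :=
    le_of_tendsto' hm_lim fun n => hsm n ▸ measure_mono (subset_iUnion s n)
  have hle : μ S + μ (T \ S) ≤ μ S + 0 := by
    rw [← measure_union' disjoint_sdiff_right (hmeas S (hunion s hs)), union_sdiff_self, add_zero]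
    exact (le_sSup (mem_image_of_mem μ hST)).trans hsup_le
  exact nonpos_iff_eq_zero.1 ((ENNReal.add_le_add_iff_left (hfin S (hunion s hs)).ne).1 hle)

end MeasureTheory

namespace TauCompact

variable {α : Type*} [MeasurableSpace α] {μ : Measure α}

theorem mem_tauCompactSet_of_forall_ae_norm_lt {f : α →ₘ[μ] ℂ}
    (h : ∀ ε > (0 : ℝ), ∃ A, μ A < ∞ ∧ ∀ᵐ ω ∂μ, ω ∉ A → ‖f ω‖ < ε) : f ∈ tauCompactSet μ := by
  intro ε hε
  obtain ⟨A, hA, hfA⟩ := h ε hε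
  refine (measure_mono_ae ?_).trans_lt hA
  filter_upwards [hfA] with ω hω hεω
  by_contra hωA
  exact (hω hωA).not_ge hεω

theorem zero_mem_tauCompactSet : (0 : α →ₘ[μ] ℂ) ∈ tauCompactSet μ :=
  mem_tauCompactSet_of_forall_ae_norm_lt fun ε hε => ⟨∅, by simp, by
    filter_upwards [AEEqFun.coeFn_zero (β := ℂ)] with ω hω _
    simpa [hω] using hε⟩

theorem add_mem_tauCompactSet {f g : α →ₘ[μ] ℂ} (hf : f ∈ tauCompactSet μ)
    (hg : g ∈ tauCompactSet μ) : f + g ∈ tauCompactSet μ := by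
  refine mem_tauCompactSet_of_forall_ae_norm_lt fun ε hε =>
    ⟨{ω | ε / 2 ≤ ‖f ω‖} ∪ {ω | ε / 2 ≤ ‖g ω‖},
      measure_union_lt_top (hf _ (half_pos hε)) (hg _ (half_pos hε)), ?_⟩
  filter_upwards [AEEqFun.coeFn_add f g] with ω hω hωA
  simp only [mem_union, mem_ofPred_eq, not_or, not_le] at hωA
  calc ‖(f + g) ω‖ ≤ ‖f ω‖ + ‖g ω‖ := hω ▸ norm_add_le _ _
    _ < ε / 2 + ε / 2 := add_lt_add hωA.1 hωA.2
    _ = ε := add_halves ε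

theorem smul_mem_tauCompactSet (c : ℂ) {f : α →ₘ[μ] ℂ} (hf : f ∈ tauCompactSet μ) :
    c • f ∈ tauCompactSet μ := by
  have hc : 0 < ‖c‖ + 1 := by positivity
  refine mem_tauCompactSet_of_forall_ae_norm_lt fun ε hε =>
    ⟨{ω | ε / (‖c‖ + 1) ≤ ‖f ω‖}, hf _ (div_pos hε hc), ?_⟩
  filter_upwards [AEEqFun.coeFn_smul c f] with ω hω hωA
  rw [not_le, lt_div_iff₀ hc] at hωA
  calc ‖(c • f) ω‖ = ‖c‖ * ‖f ω‖ := by rw [hω, Pi.smul_apply, norm_smul]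
    _ ≤ ‖f ω‖ * (‖c‖ + 1) := by nlinarith [norm_nonneg (f ω)]
    _ < ε := hωA

theorem exists_mem_tauCompactSet_ae_eq_on_disjoint {u : ℕ → α → ℂ} (hu : ∀ j, Measurable (u j))
    {r : ℕ → ℝ} (hr : Tendsto r atTop (𝓝 0)) (hur : ∀ j ω, ‖u j ω‖ ≤ r j) {C : ℕ → Set α}
    (hCm : ∀ j, MeasurableSet (C j)) (hCfin : ∀ j, μ (C j) < ∞) (hCd : Pairwise (Disjoint on C)) :
    ∃ F ∈ tauCompactSet μ, ∀ j, ∀ᵐ ω ∂μ, ω ∈ C j → F ω = u j ω := by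
  set F₀ : α → ℂ := fun ω => ∑' j, (C j).indicator (u j) ω
  have hF₀_on : ∀ j, ∀ ω ∈ C j, F₀ ω = u j ω := fun j ω hω => by
    refine (tsum_eq_single j fun i hij => indicator_of_notMem ?_ _).trans (indicator_of_mem hω _)
    exact fun hωi => disjoint_left.1 (hCd hij) hωi hω
  have hF₀_meas : Measurable F₀ := Measurable.tsum fun j => (hu j).indicator (hCm j)
  have hF₀ := AEEqFun.coeFn_mk (μ := μ) F₀ hF₀_meas.aestronglyMeasurable
  refine ⟨_, mem_tauCompactSet_of_forall_ae_norm_lt fun ε hε => ?_,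
    fun j => hF₀.mono fun ω hω hωC => hω.trans (hF₀_on j ω hωC)⟩
  obtain ⟨N, hN⟩ := eventually_atTop.1 ((tendsto_order.1 hr).2 ε hε)
  refine ⟨⋃ j ∈ Finset.range N, C j, (measure_biUnion_finset_le _ _).trans_lt
    (ENNReal.sum_lt_top.2 fun j _ => hCfin j), ?_⟩
  filter_upwards [hF₀] with ω hω hωN
  rw [hω]
  by_cases hωC : ∃ j, ω ∈ C j
  · obtain ⟨j, hj⟩ := hωC
    have hNj : N ≤ j := by
      by_contra! hjN
      exact hωN (mem_biUnion (Finset.mem_range.2 hjN) hj)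
    exact (hF₀_on j ω hj ▸ hur j ω).trans_lt (hN j hNj)
  · rw [not_exists] at hωC
    simpa [F₀, indicator_of_notMem (hωC _)] using hε

noncomputable def indicatorOne (μ : Measure α) {A : Set α} (hA : MeasurableSet A) :
    α →ₘ[μ] ℂ :=
  AEEqFun.mk (A.indicator fun _ => (1 : ℂ)) (aestronglyMeasurable_const.indicator hA)

section indicatorOne

variable {A : Set α} (hA : MeasurableSet A)

theorem coeFn_indicatorOne : ⇑(indicatorOne μ hA) =ᵐ[μ] A.indicator fun _ => 1 :=
  AEEqFun.coeFn_mk _ _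

theorem coeFn_indicatorOne_mul (a : α →ₘ[μ] ℂ) :
    ⇑(indicatorOne μ hA * a) =ᵐ[μ] A.indicator a := by
  filter_upwards [AEEqFun.coeFn_mul (indicatorOne μ hA) a, coeFn_indicatorOne hA] with ω h1 h2
  by_cases hω : ω ∈ A <;> simp [h1, h2, hω]

theorem indicatorOne_mem_tauCompactSet (hAfin : μ A < ∞) :
    indicatorOne μ hA ∈ tauCompactSet μ :=
  mem_tauCompactSet_of_forall_ae_norm_lt fun ε hε => ⟨A, hAfin, by
    filter_upwards [coeFn_indicatorOne hA] with ω hω hωA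
    simpa [hω, hωA] using hε⟩

theorem indicatorOne_mul_self : indicatorOne μ hA * indicatorOne μ hA = indicatorOne μ hA := by
  rw [indicatorOne, AEEqFun.mk_mul_mk]
  congr 1
  ext ω
  by_cases hω : ω ∈ A <;> simp [hω]

theorem indicatorOne_mul_eq_indicatorOne_mul_iff {a b : α →ₘ[μ] ℂ} :
    indicatorOne μ hA * a = indicatorOne μ hA * b ↔ ∀ᵐ ω ∂μ, ω ∈ A → a ω = b ω := by
  rw [AEEqFun.ext_iff]
  refine ⟨fun h => ?_, fun h => ?_⟩ <;>
  filter_upwards [h, coeFn_indicatorOne_mul hA a, coeFn_indicatorOne_mul hA b] with ω hω ha hb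
  · intro hωA
    rwa [ha, hb, indicator_of_mem hωA, indicator_of_mem hωA] at hω
  · rw [ha, hb]
    by_cases hωA : ω ∈ A <;> simp [hωA, hω]

theorem indicatorOne_mul_eq_self {a : α →ₘ[μ] ℂ} (h : ∀ᵐ ω ∂μ, ω ∉ A → a ω = 0) :
    indicatorOne μ hA * a = a := by
  refine AEEqFun.ext ?_
  filter_upwards [coeFn_indicatorOne_mul hA a, h] with ω ha hω
  by_cases hωA : ω ∈ A <;> simp [ha, hωA, hω]

end indicatorOne

structure IsDerivation (μ : Measure α) (D : (α →ₘ[μ] ℂ) → (α →ₘ[μ] ℂ)) : Prop where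
  map_add : ∀ f ∈ tauCompactSet μ, ∀ g ∈ tauCompactSet μ, D (f + g) = D f + D g
  map_smul : ∀ (c : ℂ), ∀ f ∈ tauCompactSet μ, D (c • f) = c • D f
  leibniz : ∀ f ∈ tauCompactSet μ, ∀ g ∈ tauCompactSet μ, D (f * g) = D f * g + f * D g

namespace IsDerivation

variable {D : (α →ₘ[μ] ℂ) → (α →ₘ[μ] ℂ)} {A : Set α}

theorem map_indicatorOne (hD : IsDerivation μ D) (hA : MeasurableSet A) (hAfin : μ A < ∞) :
    D (indicatorOne μ hA) = 0 := by
  have hχ := indicatorOne_mem_tauCompactSet hA hAfin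
  have hidem : IsIdempotentElem (indicatorOne μ hA).toGerm := by
    rw [IsIdempotentElem, ← AEEqFun.mul_toGerm, indicatorOne_mul_self]
  refine AEEqFun.toGerm_injective (hidem.eq_zero_of_eq_mul_add_mul ?_)
  rw [← AEEqFun.mul_toGerm, ← AEEqFun.mul_toGerm, ← AEEqFun.add_toGerm, ← hD.leibniz _ hχ _ hχ,
    indicatorOne_mul_self]

theorem map_indicatorOne_mul (hD : IsDerivation μ D) (hA : MeasurableSet A) (hAfin : μ A < ∞)
    {f : α →ₘ[μ] ℂ} (hf : f ∈ tauCompactSet μ) :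
    D (indicatorOne μ hA * f) = indicatorOne μ hA * D f := by
  have hzero : (0 : α →ₘ[μ] ℂ) * f = 0 := AEEqFun.toGerm_injective (by simp [AEEqFun.mul_toGerm])
  rw [hD.leibniz _ (indicatorOne_mem_tauCompactSet hA hAfin) _ hf, hD.map_indicatorOne hA hAfin,
    hzero, zero_add]

theorem ae_map_eq_on (hD : IsDerivation μ D) (hA : MeasurableSet A) (hAfin : μ A < ∞)
    {f g : α →ₘ[μ] ℂ} (hf : f ∈ tauCompactSet μ) (hg : g ∈ tauCompactSet μ)
    (hfg : ∀ᵐ ω ∂μ, ω ∈ A → f ω = g ω) : ∀ᵐ ω ∂μ, ω ∈ A → D f ω = D g ω := by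
  rw [← indicatorOne_mul_eq_indicatorOne_mul_iff hA, ← hD.map_indicatorOne_mul hA hAfin hf,
    ← hD.map_indicatorOne_mul hA hAfin hg, (indicatorOne_mul_eq_indicatorOne_mul_iff hA).2 hfg]

theorem ae_map_eq_on_of_eq_add_const (hD : IsDerivation μ D) (hA : MeasurableSet A)
    (hAfin : μ A < ∞) {f g : α →ₘ[μ] ℂ} (hf : f ∈ tauCompactSet μ) (hg : g ∈ tauCompactSet μ)
    {c : ℂ} (hfg : ∀ᵐ ω ∂μ, ω ∈ A → f ω = g ω + c) : ∀ᵐ ω ∂μ, ω ∈ A → D f ω = D g ω := by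
  have hχ := indicatorOne_mem_tauCompactSet hA hAfin
  have hshift : D (g + c • indicatorOne μ hA) = D g := by
    rw [hD.map_add _ hg _ (smul_mem_tauCompactSet c hχ), hD.map_smul c _ hχ,
      hD.map_indicatorOne hA hAfin]
    exact add_eq_left.2 (smul_zero (A := α →ₘ[μ] ℂ) c)
  rw [← hshift]
  refine hD.ae_map_eq_on hA hAfin hf (add_mem_tauCompactSet hg (smul_mem_tauCompactSet c hχ)) ?_
  filter_upwards [hfg, AEEqFun.coeFn_add g (c • indicatorOne μ hA),
    AEEqFun.coeFn_smul c (indicatorOne μ hA), coeFn_indicatorOne hA] with ω hω h1 h2 h3 hωA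
  simp [hω hωA, h1, h2, h3, hωA]

theorem exists_ae_map_eq_on_disjoint (hD : IsDerivation μ D) {f : ℕ → α →ₘ[μ] ℂ}
    (hf : ∀ j, f j ∈ tauCompactSet μ) {C : ℕ → Set α} (hCm : ∀ j, MeasurableSet (C j))
    (hCfin : ∀ j, μ (C j) < ∞) (hCd : Pairwise (Disjoint on C)) :
    ∃ F ∈ tauCompactSet μ, ∀ j, ∀ᵐ ω ∂μ, ω ∈ C j → D F ω = D (f j) ω := by
  choose idx hidx_meas hidx using fun j : ℕ =>
    exists_measurable_dist_denseSeq_lt ℂ (Nat.one_div_pos_of_nat (n := j) (α := ℝ))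
  have hidx_f : ∀ j, Measurable fun ω => idx j (f j ω) :=
    fun j => (hidx_meas j).comp (f j).measurable
  obtain ⟨F, hF, hFC⟩ := exists_mem_tauCompactSet_ae_eq_on_disjoint
    (u := fun j ω => f j ω - denseSeq ℂ (idx j (f j ω)))
    (fun j => (f j).measurable.sub (measurable_from_nat.comp (hidx_f j)))
    tendsto_one_div_add_atTop_nhds_zero_nat
    (fun j ω => by simpa [dist_eq_norm] using (hidx j (f j ω)).le) hCm hCfin hCd
  refine ⟨F, hF, fun j => ?_⟩
  -- on the piece of `C j` where the rounding index is `k`, `F` differs from `f j` by a constant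
  have hpiece : ∀ k, ∀ᵐ ω ∂μ, ω ∈ C j ∩ (fun ω => idx j (f j ω)) ⁻¹' {k} →
      D F ω = D (f j) ω := fun k =>
    hD.ae_map_eq_on_of_eq_add_const ((hCm j).inter (hidx_f j (measurableSet_singleton k)))
      ((measure_mono inter_subset_left).trans_lt (hCfin j)) hF (hf j) (c := -denseSeq ℂ k) (by
        filter_upwards [hFC j] with ω hω hωk
        rw [hω hωk.1, ← hωk.2]
        exact sub_eq_add_neg _ _)
  filter_upwards [ae_all_iff.2 hpiece] with ω hω hωC
  exact hω _ ⟨hωC, rfl⟩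

theorem measure_iUnion_one_le_norm_lt_top (hD : IsDerivation μ D)
    (hD_maps : ∀ f ∈ tauCompactSet μ, D f ∈ tauCompactSet μ) {f : ℕ → α →ₘ[μ] ℂ}
    (hf : ∀ j, f j ∈ tauCompactSet μ) : μ (⋃ j, {ω | 1 ≤ ‖D (f j) ω‖}) < ∞ := by
  set B : ℕ → Set α := fun j => {ω | 1 ≤ ‖D (f j) ω‖}
  have hBm : ∀ j, MeasurableSet (B j) :=
    fun j => measurableSet_le measurable_const (D (f j)).measurable.norm
  obtain ⟨F, hF, hDF⟩ := hD.exists_ae_map_eq_on_disjoint hf (MeasurableSet.disjointed hBm)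
    (fun j => (measure_mono (disjointed_subset B j)).trans_lt (hD_maps _ (hf j) 1 one_pos))
    (disjoint_disjointed B)
  calc μ (⋃ j, B j) = μ (⋃ j, disjointed B j) := by rw [iUnion_disjointed]
    _ ≤ μ {ω | 1 ≤ ‖D F ω‖} := measure_mono_ae <| by
        filter_upwards [ae_all_iff.2 hDF] with ω hω hωC
        obtain ⟨j, hj⟩ := mem_iUnion.1 hωC
        show 1 ≤ ‖D F ω‖
        rw [hω j hj]
        exact disjointed_subset B j hj
    _ < ∞ := hD_maps F hF 1 one_pos

theorem measure_iUnion_support_lt_top (hD : IsDerivation μ D)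
    (hD_maps : ∀ f ∈ tauCompactSet μ, D f ∈ tauCompactSet μ) {g : ℕ → α →ₘ[μ] ℂ}
    (hg : ∀ n, g n ∈ tauCompactSet μ) : μ (⋃ n, {ω | D (g n) ω ≠ 0}) < ∞ := by
  set c : ℕ → ℂ := fun m => (m.unpair.2 + 1 : ℕ)
  have hDf : ∀ m, D (c m • g m.unpair.1) =ᵐ[μ] c m • ⇑(D (g m.unpair.1)) := fun m => by
    rw [hD.map_smul _ _ (hg _)]
    exact AEEqFun.coeFn_smul _ _
  refine (measure_mono_ae ?_).trans_lt (hD.measure_iUnion_one_le_norm_lt_top hD_maps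
    (f := fun m => c m • g m.unpair.1) fun m => smul_mem_tauCompactSet _ (hg _))
  filter_upwards [ae_all_iff.2 hDf] with ω hω hωg
  obtain ⟨n, hn⟩ := mem_iUnion.1 hωg
  obtain ⟨k, hk⟩ := exists_nat_one_div_lt (norm_pos_iff.2 hn)
  refine mem_iUnion.2 ⟨Nat.pair n k, ?_⟩
  show 1 ≤ ‖D _ ω‖
  rw [hω, Pi.smul_apply, norm_smul, Complex.norm_natCast, Nat.unpair_pair]
  rw [div_lt_iff₀ (by positivity)] at hk
  simpa [mul_comm] using hk.le

theorem exists_measure_support_diff_eq_zero (hD : IsDerivation μ D)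
    (hD_maps : ∀ f ∈ tauCompactSet μ, D f ∈ tauCompactSet μ) :
    ∃ S, MeasurableSet S ∧ μ S < ∞ ∧
      ∀ f ∈ tauCompactSet μ, μ ({ω | D f ω ≠ 0} \ S) = 0 := by
  set 𝒮 : Set (Set α) := {A | ∃ g : ℕ → α →ₘ[μ] ℂ, (∀ n, g n ∈ tauCompactSet μ) ∧
    A = ⋃ n, {ω | D (g n) ω ≠ 0}}
  have hmeas : ∀ A ∈ 𝒮, MeasurableSet A := by
    rintro _ ⟨g, -, rfl⟩
    exact MeasurableSet.iUnion fun n => (D (g n)).measurable (measurableSet_singleton 0).compl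
  have hfin : ∀ A ∈ 𝒮, μ A < ∞ := by
    rintro _ ⟨g, hg, rfl⟩
    exact hD.measure_iUnion_support_lt_top hD_maps hg
  have hunion : ∀ s : ℕ → Set α, (∀ n, s n ∈ 𝒮) → ⋃ n, s n ∈ 𝒮 := by
    intro s hs
    choose g hg hgs using hs
    refine ⟨fun m => g m.unpair.1 m.unpair.2, fun m => hg _ _, ?_⟩
    rw [iUnion_unpair (fun n k => {ω | D (g n k) ω ≠ 0}), iUnion_congr hgs]
  obtain ⟨S, hS𝒮, hS⟩ := exists_mem_forall_measure_diff_eq_zero (𝒮 := 𝒮)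
    ⟨_, fun _ => 0, fun _ => zero_mem_tauCompactSet, rfl⟩ hmeas hfin hunion
  exact ⟨S, hmeas S hS𝒮, hfin S hS𝒮, fun f hf =>
    hS {ω | D f ω ≠ 0} (by exact ⟨fun _ => f, fun _ => hf, (iUnion_const _).symm⟩)⟩

end IsDerivation

end TauCompact

theorem derivation_on_tauCompact_has_finite_support_general
    {α : Type*} [MeasurableSpace α] (μ : Measure α)
    (D : (α →ₘ[μ] ℂ) → (α →ₘ[μ] ℂ))
    (hD_maps : ∀ f ∈ tauCompactSet μ, D f ∈ tauCompactSet μ)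
    (hD_add : ∀ f ∈ tauCompactSet μ, ∀ g ∈ tauCompactSet μ, D (f + g) = D f + D g)
    (hD_smul : ∀ (c : ℂ), ∀ f ∈ tauCompactSet μ, D (c • f) = c • D f)
    (hD_leibniz : ∀ f ∈ tauCompactSet μ, ∀ g ∈ tauCompactSet μ,
      D (f * g) = D f * g + f * D g) :
    ∃ S : Set α, ∃ hS : MeasurableSet S, μ S < ⊤ ∧
      ∀ f ∈ tauCompactSet μ,
        AEEqFun.mk (S.indicator fun _ => (1 : ℂ))
            (aestronglyMeasurable_const.indicator hS) * D f = D f := by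
  have hD : TauCompact.IsDerivation μ D := ⟨hD_add, hD_smul, hD_leibniz⟩
  obtain ⟨S, hS, hSfin, hsupp⟩ := hD.exists_measure_support_diff_eq_zero hD_maps
  refine ⟨S, hS, hSfin, fun f hf => TauCompact.indicatorOne_mul_eq_self hS ?_⟩
  filter_upwards [measure_eq_zero_iff_ae_notMem.1 (hsupp f hf)] with ω hω hωS
  by_contra hne
  exact hω ⟨hne, hωS⟩

/-- The support of any derivation of `S₀(μ)` over a σ-finite measure space has finite
measure: there is a measurable set `S` with `μ S < ∞` such that `χ_S · D f = D f`
for every `f ∈ S₀(μ)`. -/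
theorem derivation_on_tauCompact_has_finite_support
    {α : Type*} [MeasurableSpace α] (μ : Measure α) [SigmaFinite μ]
    (D : (α →ₘ[μ] ℂ) → (α →ₘ[μ] ℂ))
    (hD_maps : ∀ f ∈ tauCompactSet μ, D f ∈ tauCompactSet μ)
    (hD_add : ∀ f ∈ tauCompactSet μ, ∀ g ∈ tauCompactSet μ, D (f + g) = D f + D g)
    (hD_smul : ∀ (c : ℂ), ∀ f ∈ tauCompactSet μ, D (c • f) = c • D f)
    (hD_leibniz : ∀ f ∈ tauCompactSet μ, ∀ g ∈ tauCompactSet μ,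
      D (f * g) = D f * g + f * D g) :
    ∃ S : Set α, ∃ hS : MeasurableSet S, μ S < ⊤ ∧
      ∀ f ∈ tauCompactSet μ,
        AEEqFun.mk (S.indicator fun _ => (1 : ℂ))
            (aestronglyMeasurable_const.indicator hS) * D f = D f :=
  derivation_on_tauCompact_has_finite_support_general μ D hD_maps hD_add hD_smul hD_leibniz
end

section
/- Let (Ω, Σ, μ) be a finite measure space, let L⁰(μ) be the algebra of equivalence classes of measurable functions Ω → ℂ modulo μ-a.e. equality, let n ≥ 1, and let D be a ℂ-linear map on the n×n matrix algebra Mₙ(L⁰(μ)) satisfying D(xy) = D(x)y + xD(y) for all x, y. Then D can be represented as a sum D = D_a + D_δ, where D_a(x) = ax − xa for some fixed a ∈ Mₙ(L⁰(μ)), and D_δ is the entrywise application of some ℂ-linear map δ : L⁰(μ) → L⁰(μ) satisfying δ(fg) = δ(f)g + fδ(g). Moreover this representation is unique: if D = D_{a₁} + D_{δ₁} = D_{a₂} + D_{δ₂} are two such representations, then δ₁ = δ₂ and a₁x − xa₁ = a₂x − xa₂ for all x ∈ Mₙ(L⁰(μ)). -/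
open MeasureTheory

/-!
Put `e_{kl} = single k l 1` and fix an index `z`. For a derivation `D` of `Mₙ(R)` the matrix
`a = ∑ᵢ D(e_{iz}) e_{zi}` satisfies `[a, e_{kl}] = D(e_{kl})`, so `D' = D - [a, ·]` is a derivation
killing all matrix units. Then `D'(single i j r) = e_{iz} D'(single z z r) e_{zj}` only depends on
the `(z, z)` entry of `D'(single z z r)`, which defines a derivation `δ` of `R` with `D' = D_δ`.
For uniqueness, `D_δ` vanishes on matrix units, so `a₁ - a₂` commutes with all of them and is
therefore scalar, i.e. central when `R` is commutative.
-/

namespace MeasureTheory.AEEqFun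

variable {α γ : Type*} [MeasurableSpace α] {μ : Measure α}
  [TopologicalSpace γ] [CommRing γ] [IsTopologicalRing γ]

noncomputable instance : CommRing (α →ₘ[μ] γ) where
  __ := (inferInstance : AddCommGroup (α →ₘ[μ] γ))
  __ := (inferInstance : CommMonoid (α →ₘ[μ] γ))
  left_distrib f g h := toGerm_injective <| by simp [mul_toGerm, add_toGerm, mul_add]
  right_distrib f g h := toGerm_injective <| by simp [mul_toGerm, add_toGerm, add_mul]
  zero_mul f := toGerm_injective <| by simp [mul_toGerm, zero_toGerm]
  mul_zero f := toGerm_injective <| by simp [mul_toGerm, zero_toGerm]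

variable {𝕜 : Type*} [CommSemiring 𝕜] [Algebra 𝕜 γ] [ContinuousConstSMul 𝕜 γ]

instance : SMulCommClass 𝕜 (α →ₘ[μ] γ) (α →ₘ[μ] γ) :=
  ⟨fun c f g => induction_on₂ f g fun f _ g _ => by
    simp only [smul_eq_mul, mk_mul_mk, smul_mk, mul_smul_comm]⟩

instance : IsScalarTower 𝕜 (α →ₘ[μ] γ) (α →ₘ[μ] γ) :=
  ⟨fun c f g => induction_on₂ f g fun f _ g _ => by
    simp only [smul_eq_mul, mk_mul_mk, smul_mk, smul_mul_assoc]⟩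

noncomputable instance : Algebra 𝕜 (α →ₘ[μ] γ) :=
  Algebra.ofModule (fun c f g => smul_mul_assoc c f g) (fun c f g => mul_smul_comm c f g)

end MeasureTheory.AEEqFun

theorem leibniz_map_one_eq_zero {A : Type*} [NonAssocRing A] {δ : A → A}
    (hδ : ∀ f g, δ (f * g) = δ f * g + f * δ g) : δ 1 = 0 := by
  simpa using hδ 1 1

namespace Matrix

variable {K R n : Type*} [CommSemiring K] [Fintype n] [DecidableEq n]

section Ring

variable [Ring R]

theorem single_one_mul_single_one (i j k l : n) :
    (single i j 1 : Matrix n n R) * single k l 1 = if j = k then single i l 1 else 0 := by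
  split_ifs with h
  · subst h; simp
  · simp [h]

theorem exists_commutator_single_eq_of_leibniz [Nonempty n] {D : Matrix n n R → Matrix n n R}
    (hD : ∀ x y, D (x * y) = D x * y + x * D y) :
    ∃ a : Matrix n n R, ∀ k l, a * single k l 1 - single k l 1 * a = D (single k l 1) := by
  obtain ⟨z⟩ := ‹Nonempty n›
  have hD0 : D 0 = 0 := by simpa using hD 0 0
  refine ⟨∑ i, D (single i z 1) * single z i 1, fun k l => ?_⟩
  have hleft : (∑ i, D (single i z 1) * single z i 1) * single k l 1
      = D (single k z 1) * single z l 1 := by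
    simp only [Finset.sum_mul, mul_assoc, single_one_mul_single_one, mul_ite, mul_zero,
      Finset.sum_ite_eq', Finset.mem_univ, if_true]
  have hright : single k l 1 * (∑ i, D (single i z 1) * single z i 1)
      = D (single k z 1) * single z l 1 - D (single k l 1) := by
    have hmove : ∀ i, single k l 1 * D (single i z 1)
        = D (single k l 1 * single i z 1) - D (single k l 1) * single i z 1 :=
      fun i => eq_sub_of_add_eq' (hD _ _).symm
    simp_rw [Finset.mul_sum, ← mul_assoc, hmove, sub_mul, Finset.sum_sub_distrib, mul_assoc,
      single_one_mul_single_one, apply_ite D, hD0, ite_mul, zero_mul]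
    simp [← Finset.mul_sum, sum_single_one]
  rw [hleft, hright, sub_sub_cancel]

theorem apply_single_eq_single_of_leibniz {D : Matrix n n R → Matrix n n R}
    (hD : ∀ x y, D (x * y) = D x * y + x * D y) (hunit : ∀ k l, D (single k l 1) = 0)
    (i j z : n) (r : R) : D (single i j r) = single i j (D (single z z r) z z) := by
  have hfactor : single i j r = single i z 1 * single z z r * single z j 1 := by simp
  rw [hfactor, hD, hD, hunit, hunit, zero_mul, zero_add, mul_zero, add_zero,
    single_mul_mul_single, one_mul, mul_one]

variable [Algebra K R]

theorem exists_eq_map_of_leibniz_of_apply_single_one_eq_zero [Nonempty n]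
    {D : Matrix n n R →ₗ[K] Matrix n n R}
    (hD : ∀ x y, D (x * y) = D x * y + x * D y) (hunit : ∀ k l, D (single k l 1) = 0) :
    ∃ δ : R →ₗ[K] R, (∀ f g, δ (f * g) = δ f * g + f * δ g) ∧ ∀ x, D x = x.map δ := by
  obtain ⟨z⟩ := ‹Nonempty n›
  set δ : R →ₗ[K] R := entryLinearMap K R z z ∘ₗ D ∘ₗ singleLinearMap K z z
  have hsingle : ∀ i j r, D (single i j r) = single i j (δ r) :=
    fun i j => apply_single_eq_single_of_leibniz hD hunit i j z
  refine ⟨δ, fun f g => ?_, fun x => ?_⟩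
  · have h := hD (single z z f) (single z z g)
    rw [single_mul_single_same, hsingle, hsingle, hsingle, single_mul_single_same,
      single_mul_single_same, ← single_add] at h
    simpa using congr_fun₂ h z z
  · have hD_eq : D = δ.mapMatrix :=
      ext_linearMap K fun i j => LinearMap.ext fun r => by simp [hsingle]
    rw [hD_eq, LinearMap.mapMatrix_apply]

theorem exists_eq_commutator_add_map_of_leibniz [Nonempty n]
    (D : Matrix n n R →ₗ[K] Matrix n n R) (hD : ∀ x y, D (x * y) = D x * y + x * D y) :
    ∃ (a : Matrix n n R) (δ : R →ₗ[K] R), (∀ f g, δ (f * g) = δ f * g + f * δ g) ∧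
      ∀ x, D x = (a * x - x * a) + x.map δ := by
  obtain ⟨a, ha⟩ := exists_commutator_single_eq_of_leibniz hD
  set D' := D - (LinearMap.mulLeft K a - LinearMap.mulRight K a)
  have hD' : ∀ x, D' x = D x - (a * x - x * a) := fun x => rfl
  obtain ⟨δ, hδ, hD'δ⟩ := exists_eq_map_of_leibniz_of_apply_single_one_eq_zero (D := D')
    (fun x y => by simp only [hD', hD]; noncomm_ring) (fun k l => by rw [hD', ha, sub_self])
  exact ⟨a, δ, hδ, fun x => by rw [← hD'δ, hD']; abel⟩

end Ring

section CommRing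

variable [CommRing R] [Module K R]

theorem commute_of_forall_commute_single {b : Matrix n n R}
    (hb : ∀ k l, Commute (single k l 1) b) (x : Matrix n n R) : Commute b x := by
  obtain ⟨r, rfl⟩ := mem_range_scalar_iff_commute_single'.mpr hb
  exact scalar_commute r (Commute.all r) x

theorem eq_and_commutator_eq_of_commutator_add_map_eq [Nonempty n]
    {a₁ a₂ : Matrix n n R} {δ₁ δ₂ : R →ₗ[K] R} (hδ₁ : δ₁ 1 = 0) (hδ₂ : δ₂ 1 = 0)
    (h : ∀ x, (a₁ * x - x * a₁) + x.map δ₁ = (a₂ * x - x * a₂) + x.map δ₂) :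
    δ₁ = δ₂ ∧ ∀ x, a₁ * x - x * a₁ = a₂ * x - x * a₂ := by
  obtain ⟨z⟩ := ‹Nonempty n›
  have hdiff : ∀ x, a₁ * x - x * a₁ - (a₂ * x - x * a₂) = (a₁ - a₂) * x - x * (a₁ - a₂) :=
    fun x => by noncomm_ring
  have hunit : ∀ k l, Commute (single k l 1) (a₁ - a₂) := fun k l => by
    have hkl := h (single k l 1)
    rw [map_single, map_single, hδ₁, hδ₂, single_zero, add_zero, add_zero] at hkl
    exact (sub_eq_zero.mp (by rw [← hdiff, sub_eq_zero.mpr hkl])).symm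
  have hcomm : ∀ x, a₁ * x - x * a₁ = a₂ * x - x * a₂ := fun x =>
    sub_eq_zero.mp (by rw [hdiff, sub_eq_zero.mpr (commute_of_forall_commute_single hunit x).eq])
  refine ⟨LinearMap.ext fun f => ?_, hcomm⟩
  have hmap := h (single z z f)
  rw [hcomm, add_right_inj, map_single, map_single] at hmap
  simpa using congr_fun₂ hmap z z

end CommRing

end Matrix

theorem derivation_on_matrix_L0_decomposition_general
    {α : Type*} [MeasurableSpace α] (μ : Measure α)
    (n : ℕ) (hn : 1 ≤ n)
    (D : Matrix (Fin n) (Fin n) (α →ₘ[μ] ℂ) →ₗ[ℂ] Matrix (Fin n) (Fin n) (α →ₘ[μ] ℂ))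
    (hD_leibniz : ∀ x y : Matrix (Fin n) (Fin n) (α →ₘ[μ] ℂ),
      D (x * y) = D x * y + x * D y) :
    (∃ (a : Matrix (Fin n) (Fin n) (α →ₘ[μ] ℂ))
        (δ : (α →ₘ[μ] ℂ) →ₗ[ℂ] (α →ₘ[μ] ℂ)),
      (∀ f g : α →ₘ[μ] ℂ, δ (f * g) = δ f * g + f * δ g) ∧
      (∀ x : Matrix (Fin n) (Fin n) (α →ₘ[μ] ℂ),
        D x = (a * x - x * a) + x.map δ)) ∧
    (∀ (a₁ a₂ : Matrix (Fin n) (Fin n) (α →ₘ[μ] ℂ))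
        (δ₁ δ₂ : (α →ₘ[μ] ℂ) →ₗ[ℂ] (α →ₘ[μ] ℂ)),
      (∀ f g : α →ₘ[μ] ℂ, δ₁ (f * g) = δ₁ f * g + f * δ₁ g) →
      (∀ f g : α →ₘ[μ] ℂ, δ₂ (f * g) = δ₂ f * g + f * δ₂ g) →
      (∀ x : Matrix (Fin n) (Fin n) (α →ₘ[μ] ℂ),
        D x = (a₁ * x - x * a₁) + x.map δ₁) →
      (∀ x : Matrix (Fin n) (Fin n) (α →ₘ[μ] ℂ),
        D x = (a₂ * x - x * a₂) + x.map δ₂) →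
      δ₁ = δ₂ ∧
        ∀ x : Matrix (Fin n) (Fin n) (α →ₘ[μ] ℂ),
          a₁ * x - x * a₁ = a₂ * x - x * a₂) := by
  have : Nonempty (Fin n) := ⟨⟨0, hn⟩⟩
  refine ⟨Matrix.exists_eq_commutator_add_map_of_leibniz D hD_leibniz, ?_⟩
  intro a₁ a₂ δ₁ δ₂ hδ₁ hδ₂ h₁ h₂
  exact Matrix.eq_and_commutator_eq_of_commutator_add_map_eq (leibniz_map_one_eq_zero hδ₁)
    (leibniz_map_one_eq_zero hδ₂) fun x => (h₁ x).symm.trans (h₂ x)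

/-- Every derivation `D` of the matrix algebra `Mₙ(L⁰(μ))` over a finite measure space
decomposes uniquely as `D = D_a + D_δ` with `D_a` inner (implemented by some matrix
`a`) and `D_δ` the entrywise application of a derivation `δ` of `L⁰(μ)`. -/
theorem derivation_on_matrix_L0_decomposition
    {α : Type*} [MeasurableSpace α] (μ : Measure α) [IsFiniteMeasure μ]
    (n : ℕ) (hn : 1 ≤ n)
    (D : Matrix (Fin n) (Fin n) (α →ₘ[μ] ℂ) →ₗ[ℂ] Matrix (Fin n) (Fin n) (α →ₘ[μ] ℂ))
    (hD_leibniz : ∀ x y : Matrix (Fin n) (Fin n) (α →ₘ[μ] ℂ),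
      D (x * y) = D x * y + x * D y) :
    (∃ (a : Matrix (Fin n) (Fin n) (α →ₘ[μ] ℂ))
        (δ : (α →ₘ[μ] ℂ) →ₗ[ℂ] (α →ₘ[μ] ℂ)),
      (∀ f g : α →ₘ[μ] ℂ, δ (f * g) = δ f * g + f * δ g) ∧
      (∀ x : Matrix (Fin n) (Fin n) (α →ₘ[μ] ℂ),
        D x = (a * x - x * a) + x.map δ)) ∧
    (∀ (a₁ a₂ : Matrix (Fin n) (Fin n) (α →ₘ[μ] ℂ))
        (δ₁ δ₂ : (α →ₘ[μ] ℂ) →ₗ[ℂ] (α →ₘ[μ] ℂ)),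
      (∀ f g : α →ₘ[μ] ℂ, δ₁ (f * g) = δ₁ f * g + f * δ₁ g) →
      (∀ f g : α →ₘ[μ] ℂ, δ₂ (f * g) = δ₂ f * g + f * δ₂ g) →
      (∀ x : Matrix (Fin n) (Fin n) (α →ₘ[μ] ℂ),
        D x = (a₁ * x - x * a₁) + x.map δ₁) →
      (∀ x : Matrix (Fin n) (Fin n) (α →ₘ[μ] ℂ),
        D x = (a₂ * x - x * a₂) + x.map δ₂) →
      δ₁ = δ₂ ∧
        ∀ x : Matrix (Fin n) (Fin n) (α →ₘ[μ] ℂ),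
          a₁ * x - x * a₁ = a₂ * x - x * a₂) :=
  derivation_on_matrix_L0_decomposition_general μ n hn D hD_leibniz
end

section
/- Let R be a unital ring, let I be a two-sided ideal of R such that every element of I is a finite sum of products xy with x, y ∈ I, let D : I → I be an additive map satisfying D(xy) = D(x)y + xD(y) for all x, y ∈ I, and let z ∈ R be a central idempotent (z² = z and z commutes with every element of R). Then D(zx) = zD(x) for every x ∈ I. -/
/-!
For a central idempotent `e`, the ring splits as `eR × (1 - e)R`, and the Leibniz rule shows that
`D` respects this splitting on `I`: every `e * x` with `x ∈ I` is a sum of products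
`(e * a) * (e * b)` with `a, b ∈ I`, and `(1 - e)` kills both terms of
`D (e * a) * (e * b) + e * a * D (e * b)`. Hence `(1 - e) * D (e * x) = 0`; applying this to `z`
and to `1 - z` and splitting `D x = D (z * x) + D ((1 - z) * x)` gives `D (z * x) = z * D x`.
-/

namespace TwoSidedIdeal

variable {R : Type*} [Ring R] (I : TwoSidedIdeal R) {D : R → R}

theorem map_zero_of_map_add (hD_add : ∀ x ∈ I, ∀ y ∈ I, D (x + y) = D x + D y) :
    D 0 = 0 := by
  simpa using hD_add 0 I.zero_mem 0 I.zero_mem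

theorem map_sum_of_map_add (hD_add : ∀ x ∈ I, ∀ y ∈ I, D (x + y) = D x + D y)
    {ι : Type*} (s : Finset ι) {f : ι → R} (hf : ∀ i ∈ s, f i ∈ I) :
    D (∑ i ∈ s, f i) = ∑ i ∈ s, D (f i) := by
  classical
  induction s using Finset.induction_on with
  | empty => simpa using I.map_zero_of_map_add hD_add
  | insert i s hi ih =>
    have hfs : ∀ j ∈ s, f j ∈ I := fun j hj => hf j (Finset.mem_insert_of_mem hj)
    rw [Finset.sum_insert hi, Finset.sum_insert hi,
      hD_add _ (hf i (Finset.mem_insert_self i s)) _ (sum_mem hfs), ih hfs]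

variable {e : R} (he : IsIdempotentElem e) (he_central : ∀ r : R, e * r = r * e)
include he he_central

theorem one_sub_mul_map_mul_mul_eq_zero
    (hD_leibniz : ∀ x ∈ I, ∀ y ∈ I, D (x * y) = D x * y + x * D y)
    {a b : R} (ha : a ∈ I) (hb : b ∈ I) :
    (1 - e) * D (e * a * (e * b)) = 0 := by
  have hcompl : (1 - e) * e = 0 := he.one_sub_mul_self
  have hfirst : D (e * a) * (e * b) = e * (D (e * a) * b) := by
    rw [← mul_assoc, ← he_central, mul_assoc]
  rw [hD_leibniz _ (I.mul_mem_left e a ha) _ (I.mul_mem_left e b hb), hfirst, mul_assoc e a,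
    mul_add, ← mul_assoc (1 - e) e, ← mul_assoc (1 - e) e, hcompl, zero_mul, zero_mul, add_zero]

theorem one_sub_mul_map_mul_eq_zero
    (h_sq : ∀ a ∈ I, ∃ (m : ℕ) (x y : Fin m → R),
      (∀ i, x i ∈ I) ∧ (∀ i, y i ∈ I) ∧ a = ∑ i, x i * y i)
    (hD_add : ∀ x ∈ I, ∀ y ∈ I, D (x + y) = D x + D y)
    (hD_leibniz : ∀ x ∈ I, ∀ y ∈ I, D (x * y) = D x * y + x * D y)
    {x : R} (hx : x ∈ I) :
    (1 - e) * D (e * x) = 0 := by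
  obtain ⟨m, a, b, ha, hb, rfl⟩ := h_sq x hx
  have hsplit : e * ∑ i, a i * b i = ∑ i, e * a i * (e * b i) := by
    rw [Finset.mul_sum]
    refine Finset.sum_congr rfl fun i _ => ?_
    rw [Commute.mul_mul_mul_comm (he_central (a i)).symm, he.eq]
  have hmem : ∀ i ∈ Finset.univ, e * a i * (e * b i) ∈ I :=
    fun i _ => I.mul_mem_right _ _ (I.mul_mem_left e _ (ha i))
  rw [hsplit, I.map_sum_of_map_add hD_add _ hmem, Finset.mul_sum]
  exact Finset.sum_eq_zero fun i _ =>
    I.one_sub_mul_map_mul_mul_eq_zero he he_central hD_leibniz (ha i) (hb i)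

end TwoSidedIdeal

theorem derivation_commutes_with_central_idempotent_general
    {R : Type*} [Ring R] (I : TwoSidedIdeal R)
    (h_sq : ∀ a ∈ I, ∃ (m : ℕ) (x y : Fin m → R),
      (∀ i, x i ∈ I) ∧ (∀ i, y i ∈ I) ∧ a = ∑ i, x i * y i)
    (D : R → R)
    (hD_add : ∀ x ∈ I, ∀ y ∈ I, D (x + y) = D x + D y)
    (hD_leibniz : ∀ x ∈ I, ∀ y ∈ I, D (x * y) = D x * y + x * D y)
    (z : R) (hz_idem : z * z = z) (hz_central : ∀ r : R, z * r = r * z) :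
    ∀ x ∈ I, D (z * x) = z * D x := by
  intro x hx
  have hz : IsIdempotentElem z := hz_idem
  have hcompl_central : ∀ r : R, (1 - z) * r = r * (1 - z) := fun r => by
    rw [sub_mul, mul_sub, one_mul, mul_one, hz_central]
  have hz_part : (1 - z) * D (z * x) = 0 :=
    I.one_sub_mul_map_mul_eq_zero hz hz_central h_sq hD_add hD_leibniz hx
  have hcompl_part : z * D ((1 - z) * x) = 0 := by
    have := I.one_sub_mul_map_mul_eq_zero hz.one_sub hcompl_central h_sq hD_add hD_leibniz hx
    rwa [sub_sub_cancel] at this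
  have hsplit : D x = D (z * x) + D ((1 - z) * x) := by
    rw [← hD_add _ (I.mul_mem_left z x hx) _ (I.mul_mem_left _ x hx), ← add_mul,
      add_sub_cancel, one_mul]
  calc D (z * x) = z * D (z * x) + (1 - z) * D (z * x) := by
        rw [← add_mul, add_sub_cancel, one_mul]
    _ = z * D x := by rw [hz_part, add_zero, hsplit, mul_add, hcompl_part, add_zero]

/-- If `I` is a two-sided ideal of a unital ring `R` in which every element is a finite
sum of products of pairs of elements of `I`, `D : I → I` is a derivation, and `z ∈ R`
is a central idempotent, then `D(zx) = z·D(x)` for all `x ∈ I`. -/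
theorem derivation_commutes_with_central_idempotent
    {R : Type*} [Ring R] (I : TwoSidedIdeal R)
    (h_sq : ∀ a ∈ I, ∃ (m : ℕ) (x y : Fin m → R),
      (∀ i, x i ∈ I) ∧ (∀ i, y i ∈ I) ∧ a = ∑ i, x i * y i)
    (D : R → R)
    (hD_maps : ∀ x ∈ I, D x ∈ I)
    (hD_add : ∀ x ∈ I, ∀ y ∈ I, D (x + y) = D x + D y)
    (hD_leibniz : ∀ x ∈ I, ∀ y ∈ I, D (x * y) = D x * y + x * D y)
    (z : R) (hz_idem : z * z = z) (hz_central : ∀ r : R, z * r = r * z) :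
    ∀ x ∈ I, D (z * x) = z * D x :=
  derivation_commutes_with_central_idempotent_general I h_sq D hD_add hD_leibniz z hz_idem
    hz_central
end

section
/- Let R be a unital ring, let I be a two-sided ideal of R, let D : I → I be an additive map satisfying D(xy) = D(x)y + xD(y) for all x, y ∈ I, and let z, λ ∈ R be central elements of R with z ∈ I (so also zλ ∈ I). If D(z) = 0 and D(zλ) = 0, then z·D(λx) = zλ·D(x) for every x ∈ I. -/
/-- Core of Lemma 3.2: if a derivation `D` on a two-sided ideal `I` of a unital ring
`R` kills the central elements `z ∈ I` and `zλ`, then `z·D(λx) = zλ·D(x)` for `x ∈ I`. -/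
theorem derivation_central_linearity
    {R : Type*} [Ring R] (I : TwoSidedIdeal R)
    (D : R → R)
    (hD_maps : ∀ x ∈ I, D x ∈ I)
    (hD_add : ∀ x ∈ I, ∀ y ∈ I, D (x + y) = D x + D y)
    (hD_leibniz : ∀ x ∈ I, ∀ y ∈ I, D (x * y) = D x * y + x * D y)
    (z l : R)
    (hz_central : ∀ r : R, z * r = r * z)
    (hl_central : ∀ r : R, l * r = r * l)
    (hzI : z ∈ I)
    (hDz : D z = 0) (hDzl : D (z * l) = 0) :
    ∀ x ∈ I, z * D (l * x) = z * l * D x := by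
  intro x hx
  have hlx : l * x ∈ I := I.mul_mem_left l x hx
  have hzl : z * l ∈ I := I.mul_mem_right z l hzI
  have h1 : D (z * (l * x)) = z * D (l * x) := by
    rw [hD_leibniz z hzI (l * x) hlx, hDz, zero_mul, zero_add]
  have h2 : D (z * l * x) = z * l * D x := by
    rw [hD_leibniz (z * l) hzl x hx, hDzl, zero_mul, zero_add]
  rw [← h1, ← h2, mul_assoc]
end

section
/- Let R be a unital ring, let I be a two-sided ideal of R, let D : I → I be an additive map satisfying D(xy) = D(x)y + xD(y) for all x, y ∈ I, let λ ∈ R be central, and let p ∈ I be an idempotent such that D(λp) = λD(p). Then for every x ∈ I with xp = x one has D(λx) = λD(x). -/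
/-- Case (iii) of Lemma 3.11: if `D` is a derivation on a two-sided ideal `I` of a
unital ring `R`, `λ` is central, and `p ∈ I` is an idempotent with `D(λp) = λD(p)`,
then `D(λx) = λD(x)` for every `x ∈ I` with `xp = x`. -/
theorem derivation_central_linearity_of_supported_elements
    {R : Type*} [Ring R] (I : TwoSidedIdeal R)
    (D : R → R)
    (hD_maps : ∀ x ∈ I, D x ∈ I)
    (hD_add : ∀ x ∈ I, ∀ y ∈ I, D (x + y) = D x + D y)
    (hD_leibniz : ∀ x ∈ I, ∀ y ∈ I, D (x * y) = D x * y + x * D y)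
    (l : R) (hl_central : ∀ r : R, l * r = r * l)
    (p : R) (hp : p ∈ I) (hp_idem : p * p = p)
    (hDlp : D (l * p) = l * D p) :
    ∀ x ∈ I, x * p = x → D (l * x) = l * D x := by
  intro x hx hxp
  have hlp : l * p ∈ I := I.mul_mem_left l p hp
  have h1 : l * x = x * (l * p) := by
    rw [← mul_assoc, ← hl_central x, mul_assoc, hxp]
  have h2 : D (l * x) = D x * (l * p) + x * (l * D p) := by
    rw [h1, hD_leibniz x hx (l * p) hlp, hDlp]
  have h3 : D x * (l * p) = l * (D x * p) := by
    rw [← mul_assoc, ← hl_central (D x), mul_assoc]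
  have h4 : x * (l * D p) = l * (x * D p) := by
    rw [← mul_assoc, ← hl_central x, mul_assoc]
  rw [h2, h3, h4, ← mul_add, ← hD_leibniz x hx p hp, hxp]
end
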